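/- arXiv:2004.01781 — 4 statements merged into one kernel-verified Lean document; each statement's English description precedes it below -/
import Mathlib

section
/- Cycle pumping preserves paths: let π = p ++ c ++ s be a list of arcs forming a path, where c is nonempty and tgt (c.getLast) = src (c.head) (i.e., c is a cycle). Then for every natural number m ≥ 1, the list p ++ c^m ++ s is also a path, and it has the same first arc and the same last arc as π. -/
/-! The cycle condition says that `c` chains with itself, so `c^m` is a path, and for `m ≥ 1`
it has the same first and last arc as `c`. The junctions of `p ++ d ++ s` and its end arcs
depend on `d` only through the end arcs of `d`, so replacing `c` by `c^m` keeps all of them. -/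

namespace List

variable {α : Type*} {R : α → α → Prop}

theorem head?_flatten_replicate_succ (c : List α) (k : ℕ) :
    (replicate (k + 1) c).flatten.head? = c.head? := by
  cases c <;> simp [replicate_succ]

theorem getLast?_flatten_replicate_succ (c : List α) (k : ℕ) :
    (replicate (k + 1) c).flatten.getLast? = c.getLast? := by
  cases c using reverseRecOn <;> simp [replicate_succ']

theorem isChain_flatten_replicate {c : List α} (hc : c ≠ []) (h : IsChain R c)
    (hcycle : R (c.getLast hc) (c.head hc)) (m : ℕ) : IsChain R (replicate m c).flatten := by
  refine (isChain_flatten (by simp [hc.symm])).2 ⟨fun l hl ↦ eq_of_mem_replicate hl ▸ h, ?_⟩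
  refine isChain_replicate_of_rel m ?_
  simpa [getLast?_eq_some_getLast hc, head?_eq_some_head hc] using hcycle

theorem IsChain.replace_infix {p c d s : List α} (h : IsChain R (p ++ c ++ s))
    (hd : IsChain R d) (hhead : d.head? = c.head?) (hlast : d.getLast? = c.getLast?) :
    IsChain R (p ++ d ++ s) := by
  simp only [isChain_append, getLast?_append, hhead, hlast] at h ⊢
  tauto

end List

open List in
/-- Cycle pumping preserves paths: if `π = p ++ c ++ s` is a path and `c` is a
nonempty cycle (the target of its last arc is the source of its first arc), then
for every `m ≥ 1`, `p ++ c^m ++ s` is also a path with the same first and last arcs. -/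
theorem cycle_pumping {S N : Type*} (p c s : List (N × S × N))
    (hc : c ≠ [])
    (hcycle : (c.getLast hc).2.2 = (c.head hc).1)
    (hpath : List.Chain' (fun a b => a.2.2 = b.1) (p ++ c ++ s))
    (m : ℕ) (hm : 1 ≤ m) :
    List.Chain' (fun a b => a.2.2 = b.1) (p ++ (List.replicate m c).flatten ++ s) ∧
    (p ++ (List.replicate m c).flatten ++ s).head? = (p ++ c ++ s).head? ∧
    (p ++ (List.replicate m c).flatten ++ s).getLast? = (p ++ c ++ s).getLast? := by
  obtain ⟨k, rfl⟩ : ∃ k, m = k + 1 := ⟨m - 1, by omega⟩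
  have hhead := head?_flatten_replicate_succ c k
  have hlast := getLast?_flatten_replicate_succ c k
  have hcycle_path : IsChain (fun a b : N × S × N ↦ a.2.2 = b.1) c :=
    IsChain.infix hpath ⟨p, s, rfl⟩
  refine ⟨IsChain.replace_infix hpath (isChain_flatten_replicate hc hcycle_path hcycle _)
    hhead hlast, ?_, ?_⟩
  · simp only [head?_append, hhead]
  · simp only [getLast?_append, hlast]
end

section
/- Matched-arc pumping preserves paths: let π = p ++ c₁ ++ c₂ ++ s be a list of arcs forming a path, and suppose there are indices j < c₁.length and j' < c₂.length such that the arc at position j of c₁ equals the arc at position j' of c₂. Define the middle copy mid := c₂.take (j' + 1) ++ c₁.drop (j + 1). Then for every natural number m ≥ 0, the list p ++ c₁ ++ mid^m ++ c₂ ++ s is also a path, and (for nonempty c₁ and c₂) it has the same first arc and the same last arc as π. -/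
/-!
Let `a = c₁[j] = c₂[j']`. The middle copy `mid` follows `c₂` up to `a` and then continues as `c₁`
does after `a`, so it is a path that starts with the first arc of `c₂` and ends with the last arc
of `c₁`. Each junction `c₁ | mid`, `mid | mid`, `mid | c₂` therefore joins the same two arcs as
the junction `c₁ | c₂` of `π`, which is valid because `π` is a path.
-/

namespace List

variable {α : Type*} {R : α → α → Prop}

theorem IsChain.append_flatten_replicate_append {A B C : List α} (hAC : IsChain R (A ++ C))
    (hB : IsChain R B) (hhead : B.head? = C.head?) (hlast : B.getLast? = A.getLast?) (m : ℕ) :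
    IsChain R (A ++ (replicate m B).flatten ++ C) := by
  obtain ⟨hA, hC, hlink⟩ := isChain_append.1 hAC
  suffices IsChain R ((replicate m B).flatten ++ C) ∧
      ∀ x ∈ A.getLast?, ∀ y ∈ ((replicate m B).flatten ++ C).head?, R x y by
    rw [append_assoc]
    exact isChain_append.2 ⟨hA, this⟩
  induction m with
  | zero => exact ⟨hC, hlink⟩
  | succ n ih =>
    obtain ⟨hrest, hlink_rest⟩ := ih
    simp only [replicate_succ, flatten_cons, append_assoc] at hrest hlink_rest ⊢
    refine ⟨isChain_append.2 ⟨hB, hrest, hlast ▸ hlink_rest⟩, fun x hx y hy => ?_⟩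
    rw [head?_append] at hy
    cases hBh : B.head? with
    | none => exact hlink_rest x hx y (by simpa [hBh] using hy)
    | some b =>
      rw [hBh, Option.some_or] at hy
      exact hlink x hx y (hhead ▸ hBh ▸ hy)

theorem head?_take_succ_append {l₁ : List α} (h : l₁ ≠ []) (n : ℕ) (l : List α) :
    (l₁.take (n + 1) ++ l).head? = l₁.head? := by
  rw [head?_append_of_ne_nil _ (by simpa using h), head?_take, if_neg n.succ_ne_zero]

section Splice

variable {l₁ l₂ : List α} {j j' : ℕ} (hj : j < l₁.length) (hj' : j' < l₂.length)
  (heq : l₁[j] = l₂[j'])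
include hj hj' heq

theorem getLast?_take_succ_append_drop_succ :
    (l₂.take (j' + 1) ++ l₁.drop (j + 1)).getLast? = l₁.getLast? := by
  rw [getLast?_append, getLast?_drop]
  split_ifs with hend
  · obtain rfl : j = l₁.length - 1 := by omega
    rw [Option.none_or, getLast?_take, if_neg j'.succ_ne_zero, Nat.add_sub_cancel,
      getElem?_eq_getElem hj', Option.some_or, getLast?_eq_getElem?, getElem?_eq_getElem hj, heq]
  · rw [getLast?_eq_some_getLast (ne_nil_of_length_pos (by omega))]
    rfl

theorem IsChain.take_succ_append_drop_succ (h₁ : IsChain R l₁) (h₂ : IsChain R l₂) :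
    IsChain R (l₂.take (j' + 1) ++ l₁.drop (j + 1)) := by
  refine isChain_append.2 ⟨h₂.take _, h₁.drop _, fun x hx y hy => ?_⟩
  rw [getLast?_take, if_neg j'.succ_ne_zero] at hx
  rw [head?_drop] at hy
  obtain ⟨hnext, rfl⟩ := getElem?_eq_some_iff.1 hy
  rw [Nat.add_sub_cancel, getElem?_eq_getElem hj', Option.some_or, Option.mem_some_iff] at hx
  exact hx ▸ heq ▸ isChain_iff_getElem.1 h₁ j hnext

end Splice

end List

/-- Matched-arc pumping preserves paths: if `π = p ++ c₁ ++ c₂ ++ s` is a path and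
some arc of `c₁` equals some arc of `c₂`, then inserting any number of copies of
the middle copy `mid := c₂.take (j' + 1) ++ c₁.drop (j + 1)` between `c₁` and `c₂`
again yields a path, with the same first and last arcs. -/
theorem matched_arc_pumping {S N : Type*} (p c₁ c₂ s : List (N × S × N))
    (hpath : List.Chain' (fun a b => a.2.2 = b.1) (p ++ c₁ ++ c₂ ++ s))
    (j j' : ℕ) (hj : j < c₁.length) (hj' : j' < c₂.length)
    (heq : c₁.get ⟨j, hj⟩ = c₂.get ⟨j', hj'⟩)
    (m : ℕ) :
    List.Chain' (fun a b => a.2.2 = b.1)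
      (p ++ c₁ ++ (List.replicate m (c₂.take (j' + 1) ++ c₁.drop (j + 1))).flatten ++ c₂ ++ s) ∧
    (p ++ c₁ ++ (List.replicate m (c₂.take (j' + 1) ++ c₁.drop (j + 1))).flatten ++ c₂ ++ s).head?
      = (p ++ c₁ ++ c₂ ++ s).head? ∧
    (p ++ c₁ ++ (List.replicate m (c₂.take (j' + 1) ++ c₁.drop (j + 1))).flatten ++ c₂ ++ s).getLast?
      = (p ++ c₁ ++ c₂ ++ s).getLast? := by
  have hc₁ : c₁ ≠ [] := List.ne_nil_of_length_pos (by omega)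
  have hc₂ : c₂ ≠ [] := List.ne_nil_of_length_pos (by omega)
  have hpc₁ : p ++ c₁ ≠ [] := by simp [hc₁]
  have hc₂s : c₂ ++ s ≠ [] := by simp [hc₂]
  have hpath' : List.IsChain _ ((p ++ c₁) ++ (c₂ ++ s)) :=
    List.append_assoc (p ++ c₁) c₂ s ▸ hpath
  have hmatch : c₁[j] = c₂[j'] := heq
  obtain ⟨hchain₁, hchain₂, -⟩ := List.isChain_append.1 hpath'
  have hmid := List.IsChain.take_succ_append_drop_succ hj hj' hmatch
    (List.isChain_append.1 hchain₁).2.1 (List.isChain_append.1 hchain₂).1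
  have hpumped := hpath'.append_flatten_replicate_append hmid
    (by rw [List.head?_take_succ_append hc₂, List.head?_append_of_ne_nil _ hc₂])
    (by rw [List.getLast?_take_succ_append_drop_succ hj hj' hmatch,
      List.getLast?_append_of_ne_nil _ hc₁]) m
  simp only [List.append_assoc (_ ++ _) c₂ s] at hpumped ⊢
  refine ⟨hpumped, ?_, ?_⟩
  · rw [List.append_assoc (p ++ c₁), List.head?_append_of_ne_nil _ hpc₁,
      List.head?_append_of_ne_nil _ hpc₁]
  · rw [List.getLast?_append_of_ne_nil _ hc₂s, List.getLast?_append_of_ne_nil _ hc₂s]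
end

section
/- The middle copy carries exactly the labels of the repeat type: let ε₁ and ε₂ be lists of synchronizations with projD ε₁ = projD ε₂ = α, and let j < ε₁.length and j' < ε₂.length be positions such that the number of non-RH elements among the first j + 1 elements of ε₁ equals the number of non-RH elements among the first j' + 1 elements of ε₂ (complementary positions of the two copies of a tandem repeat). Then projD (ε₂.take (j' + 1) ++ ε₁.drop (j + 1)) = α. -/
/-- A synchronization: log move `LH`, model move `RH`, or synchronous move `MT`.
Arcs are triples `(src, label, tgt) : N × S × N`. -/
inductive Sync (S N : Type*) where
  | LH : S → Sync S N
  | RH : N × S × N → Sync S N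
  | MT : N × S × N → Sync S N

/-- The log (DAFSA) projection: the trace labels of the `LH` and `MT` elements, in order. -/
def projD {S N : Type*} : List (Sync S N) → List S :=
  List.filterMap fun x =>
    match x with
    | .LH l => some l
    | .RH _ => none
    | .MT a => some a.2.1

/-- Whether a synchronization is a model move (`RH`). -/
def isRH {S N : Type*} : Sync S N → Bool
  | .RH _ => true
  | _ => false

lemma projD_length {S N : Type*} (l : List (Sync S N)) :
    (projD l).length = (l.filter (fun x => !isRH x)).length := by
  induction l with
  | nil => rfl
  | cons a t ih =>
    cases a <;> simp [projD, List.filterMap_cons, List.filter_cons, isRH] at * <;> omega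

lemma projD_append {S N : Type*} (l₁ l₂ : List (Sync S N)) :
    projD (l₁ ++ l₂) = projD l₁ ++ projD l₂ := by
  simp [projD]

/-- The middle copy carries exactly the labels of the repeat type: if two aligned
copies `ε₁`, `ε₂` both project to `α` and positions `j`, `j'` are complementary
(the same number of non-`RH` elements precede and include them), then the middle
copy `ε₂.take (j' + 1) ++ ε₁.drop (j + 1)` also projects to `α`. -/
theorem middle_copy_labels {S N : Type*} (ε₁ ε₂ : List (Sync S N)) (α : List S)
    (h₁ : projD ε₁ = α) (h₂ : projD ε₂ = α)
    (j j' : ℕ) (hj : j < ε₁.length) (hj' : j' < ε₂.length)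
    (hcompl : ((ε₁.take (j + 1)).filter (fun x => !isRH x)).length
            = ((ε₂.take (j' + 1)).filter (fun x => !isRH x)).length) :
    projD (ε₂.take (j' + 1) ++ ε₁.drop (j + 1)) = α := by
  set k := ((ε₁.take (j + 1)).filter (fun x => !isRH x)).length with hk
  have e₁ : projD (ε₁.take (j + 1)) ++ projD (ε₁.drop (j + 1)) = α := by
    rw [← projD_append, List.take_append_drop]; exact h₁
  have e₂ : projD (ε₂.take (j' + 1)) ++ projD (ε₂.drop (j' + 1)) = α := by
    rw [← projD_append, List.take_append_drop]; exact h₂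
  have len₁ : (projD (ε₁.take (j + 1))).length = k := projD_length _
  have len₂ : (projD (ε₂.take (j' + 1))).length = k := by
    rw [projD_length]; omega
  have ht : projD (ε₂.take (j' + 1)) = α.take k := by
    rw [← e₂, List.take_left' len₂]
  have hd : projD (ε₁.drop (j + 1)) = α.drop k := by
    rw [← e₁, List.drop_left' len₁]
  rw [projD_append, ht, hd, List.take_append_drop]
end

section
/- Termination measure of the log-reduction algorithm: suppose at scan index i (0-based) the trace rt decomposes as rt = u ++ α^k ++ v with u.length = i, α nonempty and k ≥ 2, and the reduction step replaces rt by rt' := u ++ α ++ α ++ v and sets the new scan index i' := i + 2 * α.length. Then (rt.length − i) = (rt'.length − i') + k * α.length; in particular, since k * α.length ≥ 2, the measure (length of the current trace minus the scan index) strictly decreases with each reduction step, so Algorithm 1 terminates after at most rt.length loop iterations. -/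
/-- Termination measure of the log-reduction algorithm: a reduction step at scan
index `i`, collapsing a tandem repeat `α^k` (`k ≥ 2`, `α` nonempty) starting at
position `i` to two copies and advancing the scan index past them, decreases the
measure (length of the current trace minus the scan index) by exactly
`k * α.length`, hence strictly. -/
theorem reduction_step_measure {S : Type*} (rt u α v : List S) (i k : ℕ)
    (hu : u.length = i) (hα : α ≠ []) (hk : 2 ≤ k)
    (hrt : rt = u ++ (List.replicate k α).flatten ++ v) :
    rt.length - i
      = ((u ++ α ++ α ++ v).length - (i + 2 * α.length)) + k * α.length ∧
    (u ++ α ++ α ++ v).length - (i + 2 * α.length) < rt.length - i := by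
  subst hrt hu
  have hαpos : 0 < α.length := List.length_pos_iff.mpr hα
  simp [List.length_flatten, List.sum_replicate, smul_eq_mul]
  constructor
  · omega
  · have : 2 ≤ k * α.length := le_trans hk (Nat.le_mul_of_pos_right k hαpos)
    omega
end
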